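/- For the n-sided regular polygon theory with n even, two unbiased effects e = (e_x, e_y, 1/2) and f = (f_x, f_y, 1/2) on the reflecting hyperplane are coexistent if and only if for all integers k₁, k₂: (f_x - e_x)cos(2k₁π/n) + (f_y - e_y)sin(2k₁π/n) + (f_x + e_x)cos(2k₂π/n) + (f_y + e_y)sin(2k₂π/n) ≤ 1. -/

import Mathlib

/-!
On an even polygon the vertices `k` and `k + n / 2` are antipodal, so every `g` satisfies
`g(ω_k) + g(ω_{k+n/2}) = 2 g_z`; for an effect, positivity at the antipode gives
`g(ω_k) ≤ 2 g_z`, and a vector with `g_z = 0` has `|g(ω_k)| ≤ max_j g(ω_j)`.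

Necessity: for a joint observable `g₁, g₂, g₃`, `(f - e)(ω_{k₁}) ≤ g₃(ω_{k₁}) ≤ 2 g₃_z` and
`(e + f)(ω_{k₂}) - 1 ≤ g₁(ω_{k₂}) ≤ 2 g₁_z`, and `2 (g₁_z + g₃_z) = 2 f_z = 1`.

Sufficiency: let `M` and `m` be the maxima over the vertices of the linear parts of `e + f` and
`f - e`; the criterion at the maximising vertices gives `m + M ≤ 1`, and then
`g₁ = ((e + f)_xy / 2, M / 2)`, `g₂, g₃ = (∓(f - e)_xy / 2, (1 - M) / 2)` is a joint observable.
-/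

open Real

/-- The `k`-th pure state of the `n`-sided regular polygon theory. -/
noncomputable def pureState (n : ℕ) (k : ℕ) : ℝ × ℝ × ℝ :=
  (Real.cos (2 * k * π / n), Real.sin (2 * k * π / n), 1)

/-- The pairing between effect vectors and state vectors. -/
def pair (e w : ℝ × ℝ × ℝ) : ℝ := e.1 * w.1 + e.2.1 * w.2.1 + e.2.2 * w.2.2

/-- The effect space of the `n`-sided regular polygon theory. -/
noncomputable def polygonE (n : ℕ) : Set (ℝ × ℝ × ℝ) :=
  {e | ∀ k : Fin n, 0 ≤ pair e (pureState n k) ∧ pair e (pureState n k) ≤ 1}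

namespace Function.Periodic

variable {α : Type*} {φ : ℤ → α} {n : ℕ}

theorem forall_fin_iff (h : Periodic φ n) (hn : n ≠ 0) (p : α → Prop) :
    (∀ j : Fin n, p (φ j)) ↔ ∀ k, p (φ k) := by
  refine ⟨fun H k => ?_, fun H j => H j⟩
  obtain ⟨j, ⟨hj₀, hjn⟩, hkj⟩ := h.exists_mem_Ico₀ (by omega) k
  lift j to ℕ using hj₀
  exact hkj ▸ H ⟨j, by omega⟩

theorem exists_forall_le [LinearOrder α] (h : Periodic φ n) (hn : n ≠ 0) :
    ∃ k₀, ∀ k, φ k ≤ φ k₀ := by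
  obtain ⟨j, -, hj⟩ := (Finset.range n).exists_max_image (fun j : ℕ => φ j)
    (Finset.nonempty_range_iff.mpr hn)
  exact ⟨j, (h.forall_fin_iff hn (· ≤ φ j)).mp fun i => hj i (Finset.mem_range.mpr i.2)⟩

end Function.Periodic

/-- `pureState` with an integer index, so that vertices can be shifted by `n / 2` and reduced
modulo `n` freely. -/
noncomputable def pureStateInt (n : ℕ) (k : ℤ) : ℝ × ℝ × ℝ :=
  (Real.cos (2 * k * π / n), Real.sin (2 * k * π / n), 1)

variable {n : ℕ}

@[simp]
theorem pureStateInt_natCast (k : ℕ) : pureStateInt n k = pureState n k := by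
  simp [pureStateInt, pureState]

@[simp]
theorem pair_pureStateInt (a b c : ℝ) (k : ℤ) :
    pair (a, b, c) (pureStateInt n k) = a * cos (2 * k * π / n) + b * sin (2 * k * π / n) + c := by
  simp [pair, pureStateInt]

theorem pair_add_left (g h w : ℝ × ℝ × ℝ) : pair (g + h) w = pair g w + pair h w := by
  simp only [pair, Prod.fst_add, Prod.snd_add]
  ring

theorem pureStateInt_periodic (hn : n ≠ 0) : Function.Periodic (pureStateInt n) n := by
  intro k
  have hshift : 2 * ((k + n : ℤ) : ℝ) * π / n = 2 * k * π / n + (1 : ℤ) * (2 * π) := by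
    push_cast
    field_simp
  simp only [pureStateInt, hshift, cos_add_int_mul_two_pi, sin_add_int_mul_two_pi]

theorem pair_pureStateInt_add_half (hn : n ≠ 0) (heven : Even n) (g : ℝ × ℝ × ℝ) (k : ℤ) :
    pair g (pureStateInt n (k + (n / 2 : ℕ))) = 2 * g.2.2 - pair g (pureStateInt n k) := by
  obtain ⟨m, rfl⟩ := heven
  have hm : (m : ℝ) ≠ 0 := by exact_mod_cast (by omega : m ≠ 0)
  have hshift : 2 * ((k + ((m + m) / 2 : ℕ) : ℤ) : ℝ) * π / (m + m : ℕ) =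
      2 * k * π / (m + m : ℕ) + π := by
    rw [show (m + m) / 2 = m by omega]
    push_cast
    field_simp
    ring
  simp only [pair, pureStateInt, hshift, cos_add_pi, sin_add_pi]
  ring

theorem pair_pureStateInt_periodic (hn : n ≠ 0) (g : ℝ × ℝ × ℝ) :
    Function.Periodic (fun k => pair g (pureStateInt n k)) n :=
  (pureStateInt_periodic hn).comp (pair g)

theorem forall_fin_pureState_iff (hn : n ≠ 0) (g : ℝ × ℝ × ℝ) (p : ℝ → Prop) :
    (∀ j : Fin n, p (pair g (pureState n j))) ↔ ∀ k : ℤ, p (pair g (pureStateInt n k)) := by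
  simpa using (pair_pureStateInt_periodic hn g).forall_fin_iff hn p

theorem mem_polygonE_iff (hn : n ≠ 0) {g : ℝ × ℝ × ℝ} :
    g ∈ polygonE n ↔ ∀ k : ℤ, 0 ≤ pair g (pureStateInt n k) ∧ pair g (pureStateInt n k) ≤ 1 :=
  forall_fin_pureState_iff hn g fun t => 0 ≤ t ∧ t ≤ 1

theorem pair_le_two_mul_of_mem_polygonE (hn : n ≠ 0) (heven : Even n) {g : ℝ × ℝ × ℝ}
    (hg : g ∈ polygonE n) (k : ℤ) : pair g (pureStateInt n k) ≤ 2 * g.2.2 := by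
  have hantipode := ((mem_polygonE_iff hn).mp hg (k + (n / 2 : ℕ))).1
  rw [pair_pureStateInt_add_half hn heven] at hantipode
  linarith

theorem abs_pair_le_of_forall_le (hn : n ≠ 0) (heven : Even n) {g : ℝ × ℝ × ℝ} (hg : g.2.2 = 0)
    {M : ℝ} (hM : ∀ k, pair g (pureStateInt n k) ≤ M) (k : ℤ) :
    |pair g (pureStateInt n k)| ≤ M := by
  have hantipode := hM (k + (n / 2 : ℕ))
  rw [pair_pureStateInt_add_half hn heven, hg] at hantipode
  exact abs_le.mpr ⟨by linarith, hM k⟩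

theorem criterion_of_coexistent (hn : n ≠ 0) (heven : Even n) {ex ey fx fy : ℝ}
    {g₁ g₂ g₃ : ℝ × ℝ × ℝ} (hg₁ : g₁ ∈ polygonE n) (hg₂ : g₂ ∈ polygonE n)
    (hg₃ : g₃ ∈ polygonE n) (h₁₂ : g₁ + g₂ = (ex, ey, 1 / 2)) (h₁₃ : g₁ + g₃ = (fx, fy, 1 / 2))
    (hsum : ∀ k : Fin n, pair (g₁ + g₂ + g₃) (pureState n k) ≤ 1) (k₁ k₂ : ℤ) :
    (fx - ex) * cos (2 * k₁ * π / n) + (fy - ey) * sin (2 * k₁ * π / n)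
      + (fx + ex) * cos (2 * k₂ * π / n) + (fy + ey) * sin (2 * k₂ * π / n) ≤ 1 := by
  have hz : g₁.2.2 + g₃.2.2 = 1 / 2 := by simpa using congrArg (·.2.2) h₁₃
  have he₁ := congrArg (pair · (pureStateInt n k₁)) h₁₂
  have hf₁ := congrArg (pair · (pureStateInt n k₁)) h₁₃
  have he₂ := congrArg (pair · (pureStateInt n k₂)) h₁₂
  have hf₂ := congrArg (pair · (pureStateInt n k₂)) h₁₃
  simp only [pair_add_left, pair_pureStateInt] at he₁ hf₁ he₂ hf₂
  have hs := (forall_fin_pureState_iff hn _ (· ≤ 1)).mp hsum k₂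
  rw [pair_add_left, pair_add_left] at hs
  have hg₂k₁ := ((mem_polygonE_iff hn).mp hg₂ k₁).1
  have hg₁k₂ := pair_le_two_mul_of_mem_polygonE hn heven hg₁ k₂
  have hg₃k₁ := pair_le_two_mul_of_mem_polygonE hn heven hg₃ k₁
  linarith

theorem coexistent_of_criterion (hn : n ≠ 0) (heven : Even n) {ex ey fx fy : ℝ}
    (h : ∀ k₁ k₂ : ℤ, (fx - ex) * cos (2 * k₁ * π / n) + (fy - ey) * sin (2 * k₁ * π / n)
      + (fx + ex) * cos (2 * k₂ * π / n) + (fy + ey) * sin (2 * k₂ * π / n) ≤ 1) :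
    ∃ g₁ g₂ g₃, g₁ ∈ polygonE n ∧ g₂ ∈ polygonE n ∧ g₃ ∈ polygonE n ∧
      g₁ + g₂ = (ex, ey, 1 / 2) ∧ g₁ + g₃ = (fx, fy, 1 / 2) ∧
      ∀ k : Fin n, pair (g₁ + g₂ + g₃) (pureState n k) ≤ 1 := by
  set v : ℝ × ℝ × ℝ := (fx + ex, fy + ey, 0)
  set w : ℝ × ℝ × ℝ := (fx - ex, fy - ey, 0)
  obtain ⟨k₂, hv⟩ := (pair_pureStateInt_periodic hn v).exists_forall_le hn
  obtain ⟨k₁, hw⟩ := (pair_pureStateInt_periodic hn w).exists_forall_le hn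
  set M := pair v (pureStateInt n k₂)
  set m := pair w (pureStateInt n k₁)
  have hmM : m + M ≤ 1 := by
    have := h k₁ k₂
    simp only [m, M, v, w, pair_pureStateInt]
    linarith
  have hv_abs := abs_pair_le_of_forall_le hn heven rfl hv
  have hw_abs := abs_pair_le_of_forall_le hn heven rfl hw
  have hM₀ : 0 ≤ M := (abs_nonneg _).trans (hv_abs 0)
  have hm₀ : 0 ≤ m := (abs_nonneg _).trans (hw_abs 0)
  refine ⟨((ex + fx) / 2, (ey + fy) / 2, M / 2), ((ex - fx) / 2, (ey - fy) / 2, (1 - M) / 2),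
    ((fx - ex) / 2, (fy - ey) / 2, (1 - M) / 2), ?_, ?_, ?_, ?_, ?_, ?_⟩
  · rw [mem_polygonE_iff hn]
    intro k
    have := abs_le.mp (hv_abs k)
    simp only [v, pair_pureStateInt] at this ⊢
    constructor <;> linarith
  iterate 2
    rw [mem_polygonE_iff hn]
    intro k
    have := abs_le.mp (hw_abs k)
    simp only [w, pair_pureStateInt] at this ⊢
    constructor <;> linarith
  · ext <;> simp only [Prod.fst_add, Prod.snd_add] <;> ring
  · ext <;> simp only [Prod.fst_add, Prod.snd_add] <;> ring
  · rw [forall_fin_pureState_iff hn _ (· ≤ 1)]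
    intro k
    have := hv k
    simp only [v, Prod.mk_add_mk, pair_pureStateInt] at this ⊢
    linarith

theorem polygon_coexistence_criterion_general (n : ℕ) (hn : 0 < n) (hne : Even n)
    (ex ey fx fy : ℝ) :
    (∃ g₁ g₂ g₃, g₁ ∈ polygonE n ∧ g₂ ∈ polygonE n ∧ g₃ ∈ polygonE n ∧
        g₁ + g₂ = ((ex, ey, (1/2 : ℝ)) : ℝ × ℝ × ℝ) ∧
        g₁ + g₃ = ((fx, fy, (1/2 : ℝ)) : ℝ × ℝ × ℝ) ∧
        ∀ k : Fin n, pair (g₁ + g₂ + g₃) (pureState n k) ≤ 1)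
    ↔ (∀ k₁ k₂ : ℤ,
        (fx - ex) * Real.cos (2 * k₁ * π / n) + (fy - ey) * Real.sin (2 * k₁ * π / n)
          + (fx + ex) * Real.cos (2 * k₂ * π / n) + (fy + ey) * Real.sin (2 * k₂ * π / n)
          ≤ 1) :=
  ⟨fun ⟨_, _, _, hg₁, hg₂, hg₃, h₁₂, h₁₃, hsum⟩ =>
    criterion_of_coexistent hn.ne' hne hg₁ hg₂ hg₃ h₁₂ h₁₃ hsum,
   coexistent_of_criterion hn.ne' hne⟩

/-- coexistence criterion for unbiased effects in even-sided regular
polygon theories. -/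
theorem polygon_coexistence_criterion (n : ℕ) (hn : 0 < n) (hne : Even n)
    (ex ey fx fy : ℝ)
    (he : ((ex, ey, (1/2 : ℝ)) : ℝ × ℝ × ℝ) ∈ polygonE n)
    (hf : ((fx, fy, (1/2 : ℝ)) : ℝ × ℝ × ℝ) ∈ polygonE n) :
    (∃ g₁ g₂ g₃, g₁ ∈ polygonE n ∧ g₂ ∈ polygonE n ∧ g₃ ∈ polygonE n ∧
        g₁ + g₂ = ((ex, ey, (1/2 : ℝ)) : ℝ × ℝ × ℝ) ∧
        g₁ + g₃ = ((fx, fy, (1/2 : ℝ)) : ℝ × ℝ × ℝ) ∧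
        ∀ k : Fin n, pair (g₁ + g₂ + g₃) (pureState n k) ≤ 1)
    ↔ (∀ k₁ k₂ : ℤ,
        (fx - ex) * Real.cos (2 * k₁ * π / n) + (fy - ey) * Real.sin (2 * k₁ * π / n)
          + (fx + ex) * Real.cos (2 * k₂ * π / n) + (fy + ey) * Real.sin (2 * k₂ * π / n)
          ≤ 1) :=
  polygon_coexistence_criterion_general n hn hne ex ey fx fy
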